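/- Let R be a Kähler curvature tensor on a complex inner product space V, and let C ≥ 0 be a constant such that |R(Z)| ≤ C‖Z‖⁴ for all Z ∈ V. Then for every pair of orthonormal vectors X, Y ∈ V, |R(X,Ȳ,X,Ȳ) + R(Y,X̄,Y,X̄)| ≤ 8C. -/

import Mathlib

open scoped ComplexConjugate

noncomputable section

/-- A Kähler curvature tensor on a complex inner product space `V`: a four-argument
function, whose value at `(X,Y,Z,W)` is written `R(X,Ȳ,Z,W̄)`, that is `ℂ`-linear in the
1st and 3rd arguments, conjugate-linear in the 2nd and 4th arguments, with the symmetries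
`R(X,Ȳ,Z,W̄) = R(Z,Ȳ,X,W̄) = R(X,W̄,Z,Ȳ)` and `conj (R(X,Ȳ,Z,W̄)) = R(Y,X̄,W,Z̄)`. -/
structure KahlerCurvatureTensor (V : Type*) [NormedAddCommGroup V]
    [InnerProductSpace ℂ V] where
  R : V → V → V → V → ℂ
  map_add₁ : ∀ X X' Y Z W, R (X + X') Y Z W = R X Y Z W + R X' Y Z W
  map_smul₁ : ∀ (c : ℂ) (X Y Z W), R (c • X) Y Z W = c * R X Y Z W
  map_add₂ : ∀ X Y Y' Z W, R X (Y + Y') Z W = R X Y Z W + R X Y' Z W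
  map_smul₂ : ∀ (c : ℂ) (X Y Z W), R X (c • Y) Z W = conj c * R X Y Z W
  map_add₃ : ∀ X Y Z Z' W, R X Y (Z + Z') W = R X Y Z W + R X Y Z' W
  map_smul₃ : ∀ (c : ℂ) (X Y Z W), R X Y (c • Z) W = c * R X Y Z W
  map_add₄ : ∀ X Y Z W W', R X Y Z (W + W') = R X Y Z W + R X Y Z W'
  map_smul₄ : ∀ (c : ℂ) (X Y Z W), R X Y Z (c • W) = conj c * R X Y Z W
  symm₁₃ : ∀ X Y Z W, R X Y Z W = R Z Y X W
  symm₂₄ : ∀ X Y Z W, R X Y Z W = R X W Z Y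
  conj_symm : ∀ X Y Z W, conj (R X Y Z W) = R Y X W Z

/-- The abbreviation `R(Z) := R(Z,Z̄,Z,Z̄)`. -/
def KahlerCurvatureTensor.diag {V : Type*} [NormedAddCommGroup V] [InnerProductSpace ℂ V]
    (R : KahlerCurvatureTensor V) (Z : V) : ℂ :=
  R.R Z Z Z Z

variable {V : Type*} [NormedAddCommGroup V] [InnerProductSpace ℂ V]

/-
Polarization: averaging `R(X + cY)` over the fourth roots of unity `c` with weights
`1, 1, -1, -1` isolates `4 (R(X,Ȳ,X,Ȳ) + R(Y,X̄,Y,X̄))`. For orthonormal `X, Y` each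
`X + cY` with `‖c‖ = 1` has norm `√2`, so each of the four terms is at most `4C`.
-/

namespace KahlerCurvatureTensor

theorem diag_polarization (R : KahlerCurvatureTensor V) (X Y : V) :
    R.diag (X + Y) + R.diag (X + (-1 : ℂ) • Y) - R.diag (X + Complex.I • Y)
      - R.diag (X + (-Complex.I) • Y) = 4 * (R.R X Y X Y + R.R Y X Y X) := by
  simp only [diag, R.map_add₁, R.map_add₂, R.map_add₃, R.map_add₄, R.map_smul₁, R.map_smul₂,
    R.map_smul₃, R.map_smul₄, map_neg, map_one, Complex.conj_I]
  ring_nf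
  simp only [Complex.I_sq, Complex.I_pow_four]
  ring

theorem norm_diag_add_smul_le (R : KahlerCurvatureTensor V) {C : ℝ}
    (hbound : ∀ Z : V, ‖R.diag Z‖ ≤ C * ‖Z‖ ^ 4) {X Y : V} (hX : ‖X‖ = 1) (hY : ‖Y‖ = 1)
    (hXY : (inner ℂ X Y : ℂ) = 0) {c : ℂ} (hc : ‖c‖ = 1) :
    ‖R.diag (X + c • Y)‖ ≤ 4 * C := by
  have horth : (inner ℂ X (c • Y) : ℂ) = 0 := by rw [inner_smul_right, hXY, mul_zero]
  have hnorm : ‖X + c • Y‖ * ‖X + c • Y‖ = 2 := by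
    rw [norm_add_sq_eq_norm_sq_add_norm_sq_of_inner_eq_zero _ _ horth, norm_smul, hc, hX, hY]
    norm_num
  calc ‖R.diag (X + c • Y)‖ ≤ C * (‖X + c • Y‖ * ‖X + c • Y‖) ^ 2 := by
        rw [← sq, ← pow_mul]; exact hbound _
    _ = 4 * C := by rw [hnorm]; ring

theorem norm_add_swap_le (R : KahlerCurvatureTensor V) {C : ℝ}
    (hbound : ∀ Z : V, ‖R.diag Z‖ ≤ C * ‖Z‖ ^ 4) {X Y : V} (hX : ‖X‖ = 1) (hY : ‖Y‖ = 1)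
    (hXY : (inner ℂ X Y : ℂ) = 0) :
    ‖R.R X Y X Y + R.R Y X Y X‖ ≤ 4 * C := by
  have bound {c : ℂ} (hc : ‖c‖ = 1) := R.norm_diag_add_smul_le hbound hX hY hXY hc
  have h₁ := bound (c := 1) norm_one
  rw [one_smul] at h₁
  have h₂ := bound (c := -1) (by simp)
  have h₃ := bound (c := Complex.I) Complex.norm_I
  have h₄ := bound (c := -Complex.I) (by simp)
  have h := R.diag_polarization X Y
  have : ‖(4 : ℂ) * (R.R X Y X Y + R.R Y X Y X)‖ ≤ 16 * C := by
    rw [← h]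
    refine (norm_sub_le _ _).trans ?_
    grw [norm_sub_le, norm_add_le]
    linarith
  rw [norm_mul, Complex.norm_ofNat] at this
  linarith

end KahlerCurvatureTensor

theorem stmt17 (R : KahlerCurvatureTensor V) (C : ℝ) (hC : 0 ≤ C)
    (hbound : ∀ Z : V, ‖R.diag Z‖ ≤ C * ‖Z‖ ^ 4)
    (X Y : V) (hX : ‖X‖ = 1) (hY : ‖Y‖ = 1) (hXY : (inner ℂ X Y : ℂ) = 0) :
    ‖R.R X Y X Y + R.R Y X Y X‖ ≤ 8 * C := by
  linarith [R.norm_add_swap_le hbound hX hY hXY]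

end
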